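/- Let $t_0 \in \mathbb{R}$, $\theta \ge 0$, $\mu_1, \mu_2 > 0$, let $\Upsilon : \mathbb{R} \to \mathbb{R}$ be continuously differentiable with $\Upsilon(t) > 0$ for all $t \ge t_0$, and let $\varrho_1 \ge 0$, $\varrho_2 > 0$. Let $x_1, x_2, u, d_1, d_2 : \mathbb{R} \to \mathbb{R}$ with $x_1, x_2$ differentiable, $u, d_1, d_2$ continuous, $x_1'(t) = x_2(t) + d_1(t)$, $x_2'(t) = u(t) + d_2(t)$, and $\sqrt{d_1(t)^2 + d_2(t)^2} \le \theta$ for all $t \ge t_0$. Let $h_1 : \mathbb{R}^2 \to \mathbb{R}$ be twice continuously differentiable with $\partial h_1/\partial p_2 \equiv 0$, set $L_f h_1(p) = \frac{\partial h_1}{\partial p_1}(p)\,p_2$, $\Lambda_1(p) = \frac{1}{4\mu_1}\|\nabla h_1(p)\|^2 + \mu_1\theta^2$, $h_2(t,p) = \varrho_1\,\Upsilon(t)\,h_1(p) + L_f h_1(p) - \Lambda_1(p)$, and $\Lambda_2(t,p) = \frac{1}{4\mu_2}\|\nabla_p h_2(t,p)\|^2 + \mu_2\theta^2$. Assume $h_2(t_0,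 x(t_0)) > 0$ and that for all $t \ge t_0$ the control satisfies $\partial_t h_2(t, x(t)) + \nabla_p h_2(t, x(t)) \cdot (x_2(t), u(t)) - \Lambda_2(t, x(t)) \ge -\varrho_2\,\Upsilon(t)\,h_2(t, x(t))$. Then $h_2(t, x(t)) \ge h_2(t_0, x(t_0))\,\exp\big(-\varrho_2 \int_{t_0}^{t} \Upsilon(s)\,ds\big) > 0$ for all $t \ge t_0$. -/

import Mathlib

/-!
Along the perturbed trajectory the derivative of `h₂` is the nominal derivative constrained by the
quadratic program plus the disturbance term `∇_p h₂ ⋅ d`. By Young's inequality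
`b e ≥ -(b² / (4μ) + μ e²)` and `‖d‖ ≤ θ`, that term is at least `-Λ₂`, so
`d/dt h₂ ≥ -ϱ₂ Υ h₂`; the comparison lemma (monotonicity of `h₂ · exp (ϱ₂ ∫ Υ)`) gives the bound.
-/

open Real Set Function

theorem neg_young_le_mul {μ : ℝ} (hμ : 0 < μ) (b e : ℝ) :
    -(1 / (4 * μ) * b ^ 2 + μ * e ^ 2) ≤ b * e := by
  have hsq : 0 ≤ (b + 2 * μ * e) ^ 2 / (4 * μ) := by positivity
  have hexpand : (b + 2 * μ * e) ^ 2 / (4 * μ) = 1 / (4 * μ) * b ^ 2 + b * e + μ * e ^ 2 := by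
    field_simp
    ring
  linarith

theorem neg_young_le_mul_add_mul_of_sqrt_le {μ θ : ℝ} (hμ : 0 < μ) (b₁ b₂ : ℝ) {e₁ e₂ : ℝ}
    (he : √(e₁ ^ 2 + e₂ ^ 2) ≤ θ) :
    -(1 / (4 * μ) * (b₁ ^ 2 + b₂ ^ 2) + μ * θ ^ 2) ≤ b₁ * e₁ + b₂ * e₂ := by
  have hθ := (Real.sqrt_le_iff.mp he).2
  have h₁ := neg_young_le_mul hμ b₁ e₁
  have h₂ := neg_young_le_mul hμ b₂ e₂
  nlinarith

theorem ContinuousLinearMap.apply_prodMk_eq_add (L : ℝ × ℝ →L[ℝ] ℝ) (a b : ℝ) :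
    L (a, b) = L (1, 0) * a + L (0, 1) * b := by
  have hab : ((a, b) : ℝ × ℝ) = a • (1, 0) + b • (0, 1) := by simp
  rw [hab, map_add, map_smul, map_smul, smul_eq_mul, smul_eq_mul, mul_comm a, mul_comm b]

theorem hasDerivAt_comp_prodMk_of_differentiableAt_uncurry {E F : Type*}
    [NormedAddCommGroup E] [NormedSpace ℝ E] [NormedAddCommGroup F] [NormedSpace ℝ F]
    {h : ℝ → E → F} {x : ℝ → E} {v : E} {t : ℝ}
    (hh : DifferentiableAt ℝ (uncurry h) (t, x t)) (hx : HasDerivAt x v t) :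
    HasDerivAt (fun s => h s (x s)) (deriv (fun s => h s (x t)) t + fderiv ℝ (h t) (x t) v) t := by
  set L := fderiv ℝ (uncurry h) (t, x t)
  have hL : HasFDerivAt (uncurry h) L (t, x t) := hh.hasFDerivAt
  have htime : HasDerivAt (fun s => h s (x t)) (L (1, 0)) t :=
    hL.comp_hasDerivAt (f := fun s => (s, x t)) t
      ((hasDerivAt_id' t).prodMk (hasDerivAt_const t (x t)))
  have hspace : HasFDerivAt (h t) (L.comp (.inr ℝ ℝ E)) (x t) :=
    hL.comp (x t) (hasFDerivAt_prodMk_right t (x t))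
  have hcurve : HasDerivAt (fun s => h s (x s)) (L (1, v)) t :=
    hL.comp_hasDerivAt (f := fun s => (s, x s)) t ((hasDerivAt_id' t).prodMk hx)
  rw [htime.deriv, hspace.fderiv]
  convert hcurve using 1
  simp [← map_add]

theorem mul_exp_neg_integral_le_of_hasDerivAt {a y y' : ℝ → ℝ} {t₀ t : ℝ} (ha : Continuous a)
    (hy : ∀ s, t₀ ≤ s → HasDerivAt y (y' s) s) (hy' : ∀ s, t₀ ≤ s → -(a s * y s) ≤ y' s)
    (ht : t₀ ≤ t) : y t₀ * exp (-∫ s in t₀..t, a s) ≤ y t := by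
  set A : ℝ → ℝ := fun t => ∫ s in t₀..t, a s
  have hA : ∀ s, HasDerivAt A (a s) s := fun s => (ha.integral_hasStrictDerivAt t₀ s).hasDerivAt
  have hz : ∀ s, t₀ ≤ s →
      HasDerivAt (fun s => y s * exp (A s)) ((y' s + a s * y s) * exp (A s)) s := by
    intro s hs
    rw [show (y' s + a s * y s) * exp (A s) = y' s * exp (A s) + y s * (exp (A s) * a s) by ring]
    exact (hy s hs).mul (hA s).exp
  have hmono : MonotoneOn (fun s => y s * exp (A s)) (Ici t₀) :=
    monotoneOn_of_hasDerivWithinAt_nonneg (convex_Ici t₀)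
      (fun s hs => (hz s hs).continuousAt.continuousWithinAt)
      (fun s hs => (hz s (interior_subset hs)).hasDerivWithinAt)
      (fun s hs => mul_nonneg (by linarith [hy' s (interior_subset hs)]) (exp_pos _).le)
  have hle : y t₀ ≤ y t * exp (A t) := by
    simpa [A] using hmono self_mem_Ici ht ht
  calc y t₀ * exp (-A t) ≤ y t * exp (A t) * exp (-A t) :=
        mul_le_mul_of_nonneg_right hle (exp_pos _).le
    _ = y t := by rw [mul_assoc, ← exp_add, add_neg_cancel, exp_zero, mul_one]

theorem perturbed_double_integrator_h2_positive_general (t0 θ μ1 μ2 : ℝ)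
    (hμ2 : 0 < μ2)
    (Υ : ℝ → ℝ) (hΥ : ContDiff ℝ 1 Υ)
    (ϱ1 ϱ2 : ℝ)
    (x1 x2 u d1 d2 : ℝ → ℝ)
    (hx1 : ∀ t, t0 ≤ t → HasDerivAt x1 (x2 t + d1 t) t)
    (hx2 : ∀ t, t0 ≤ t → HasDerivAt x2 (u t + d2 t) t)
    (hdbound : ∀ t, t0 ≤ t → Real.sqrt (d1 t ^ 2 + d2 t ^ 2) ≤ θ)
    (h1 : ℝ × ℝ → ℝ) (hh1 : ContDiff ℝ 2 h1)
    (Λ1 : ℝ × ℝ → ℝ)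
    (hΛ1 : ∀ p, Λ1 p = 1 / (4 * μ1) *
      ((fderiv ℝ h1 p (1, 0)) ^ 2 + (fderiv ℝ h1 p (0, 1)) ^ 2) + μ1 * θ ^ 2)
    (h2 : ℝ → ℝ × ℝ → ℝ)
    (hh2 : ∀ t p, h2 t p = ϱ1 * Υ t * h1 p + fderiv ℝ h1 p (1, 0) * p.2 - Λ1 p)
    (Λ2 : ℝ → ℝ × ℝ → ℝ)
    (hΛ2 : ∀ t p, Λ2 t p = 1 / (4 * μ2) *
      ((fderiv ℝ (h2 t) p (1, 0)) ^ 2 + (fderiv ℝ (h2 t) p (0, 1)) ^ 2) + μ2 * θ ^ 2)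
    (hinit2 : 0 < h2 t0 (x1 t0, x2 t0))
    (hsafe : ∀ t, t0 ≤ t →
      deriv (fun s => h2 s (x1 t, x2 t)) t
        + (fderiv ℝ (h2 t) (x1 t, x2 t) (1, 0) * x2 t
            + fderiv ℝ (h2 t) (x1 t, x2 t) (0, 1) * u t)
        - Λ2 t (x1 t, x2 t)
        ≥ -ϱ2 * Υ t * h2 t (x1 t, x2 t)) :
    ∀ t, t0 ≤ t →
      h2 t (x1 t, x2 t) ≥
        h2 t0 (x1 t0, x2 t0) * Real.exp (-ϱ2 * ∫ s in t0..t, Υ s) ∧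
      0 < h2 t0 (x1 t0, x2 t0) * Real.exp (-ϱ2 * ∫ s in t0..t, Υ s) := by
  intro t ht
  have hΥd : Differentiable ℝ Υ := hΥ.differentiable one_ne_zero
  have hh1d : Differentiable ℝ h1 := hh1.differentiable two_ne_zero
  have hDh1d : Differentiable ℝ (fderiv ℝ h1) :=
    (hh1.fderiv_right (by norm_num)).differentiable one_ne_zero
  have hΛ1d : Differentiable ℝ Λ1 := by
    rw [funext hΛ1]
    fun_prop
  have hh2d : Differentiable ℝ (uncurry h2) := by
    rw [show uncurry h2 = fun q => ϱ1 * Υ q.1 * h1 q.2 + fderiv ℝ h1 q.2 (1, 0) * q.2.2 - Λ1 q.2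
      from funext fun q => hh2 q.1 q.2]
    fun_prop
  have hderiv : ∀ s, t0 ≤ s → HasDerivAt (fun s => h2 s (x1 s, x2 s))
      (deriv (fun r => h2 r (x1 s, x2 s)) s
        + fderiv ℝ (h2 s) (x1 s, x2 s) (x2 s + d1 s, u s + d2 s)) s := fun s hs =>
    hasDerivAt_comp_prodMk_of_differentiableAt_uncurry (hh2d _) ((hx1 s hs).prodMk (hx2 s hs))
  have hbarrier : ∀ s, t0 ≤ s → -(ϱ2 * Υ s * h2 s (x1 s, x2 s)) ≤
      deriv (fun r => h2 r (x1 s, x2 s)) s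
        + fderiv ℝ (h2 s) (x1 s, x2 s) (x2 s + d1 s, u s + d2 s) := by
    intro s hs
    have hnominal := hsafe s hs
    have hdisturbance := neg_young_le_mul_add_mul_of_sqrt_le hμ2
      (fderiv ℝ (h2 s) (x1 s, x2 s) (1, 0)) (fderiv ℝ (h2 s) (x1 s, x2 s) (0, 1)) (hdbound s hs)
    rw [hΛ2] at hnominal
    rw [ContinuousLinearMap.apply_prodMk_eq_add]
    linarith
  refine ⟨?_, mul_pos hinit2 (exp_pos _)⟩
  have hcomparison := mul_exp_neg_integral_le_of_hasDerivAt (a := fun s => ϱ2 * Υ s)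
    (continuous_const.mul hΥ.continuous) hderiv hbarrier ht
  rwa [intervalIntegral.integral_const_mul, ← neg_mul] at hcomparison

/-- Intermediate estimate in the proof of Theorem 1 (perturbed double integrator):
for `x₁' = x₂ + d₁(t)`, `x₂' = u + d₂(t)` with `‖(d₁, d₂)(t)‖ ≤ θ`, a
relative-degree-two candidate CBF `h₁` (independent of `x₂`), margins
`Λ₁(p) = (1/(4μ₁))‖∇h₁(p)‖² + μ₁θ²`, `Λ₂(t, p) = (1/(4μ₂))‖∇_p h₂(t, p)‖² + μ₂θ²`,
and backstepping barrier `h₂(t, p) = ϱ₁ Υ(t) h₁(p) + L_f h₁(p) - Λ₁(p)`, if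
`h₂(t₀, x(t₀)) > 0` and the control satisfies
`∂_t h₂ + ∇_p h₂ ⋅ (x₂, u) - Λ₂ ≥ -ϱ₂ Υ(t) h₂` along the trajectory, then
`h₂(t, x(t)) ≥ h₂(t₀, x(t₀)) exp(-ϱ₂ ∫_{t₀}^t Υ) > 0` for all `t ≥ t₀`. -/
theorem perturbed_double_integrator_h2_positive (t0 θ μ1 μ2 : ℝ)
    (hθ : 0 ≤ θ) (hμ1 : 0 < μ1) (hμ2 : 0 < μ2)
    (Υ : ℝ → ℝ) (hΥ : ContDiff ℝ 1 Υ) (hΥpos : ∀ t, t0 ≤ t → 0 < Υ t)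
    (ϱ1 ϱ2 : ℝ) (hϱ1 : 0 ≤ ϱ1) (hϱ2 : 0 < ϱ2)
    (x1 x2 u d1 d2 : ℝ → ℝ)
    (hu : Continuous u) (hd1c : Continuous d1) (hd2c : Continuous d2)
    (hx1 : ∀ t, t0 ≤ t → HasDerivAt x1 (x2 t + d1 t) t)
    (hx2 : ∀ t, t0 ≤ t → HasDerivAt x2 (u t + d2 t) t)
    (hdbound : ∀ t, t0 ≤ t → Real.sqrt (d1 t ^ 2 + d2 t ^ 2) ≤ θ)
    (h1 : ℝ × ℝ → ℝ) (hh1 : ContDiff ℝ 2 h1)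
    (hrel : ∀ p : ℝ × ℝ, fderiv ℝ h1 p (0, 1) = 0)
    (Λ1 : ℝ × ℝ → ℝ)
    (hΛ1 : ∀ p, Λ1 p = 1 / (4 * μ1) *
      ((fderiv ℝ h1 p (1, 0)) ^ 2 + (fderiv ℝ h1 p (0, 1)) ^ 2) + μ1 * θ ^ 2)
    (h2 : ℝ → ℝ × ℝ → ℝ)
    (hh2 : ∀ t p, h2 t p = ϱ1 * Υ t * h1 p + fderiv ℝ h1 p (1, 0) * p.2 - Λ1 p)
    (Λ2 : ℝ → ℝ × ℝ → ℝ)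
    (hΛ2 : ∀ t p, Λ2 t p = 1 / (4 * μ2) *
      ((fderiv ℝ (h2 t) p (1, 0)) ^ 2 + (fderiv ℝ (h2 t) p (0, 1)) ^ 2) + μ2 * θ ^ 2)
    (hinit2 : 0 < h2 t0 (x1 t0, x2 t0))
    (hsafe : ∀ t, t0 ≤ t →
      deriv (fun s => h2 s (x1 t, x2 t)) t
        + (fderiv ℝ (h2 t) (x1 t, x2 t) (1, 0) * x2 t
            + fderiv ℝ (h2 t) (x1 t, x2 t) (0, 1) * u t)
        - Λ2 t (x1 t, x2 t)
        ≥ -ϱ2 * Υ t * h2 t (x1 t, x2 t)) :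
    ∀ t, t0 ≤ t →
      h2 t (x1 t, x2 t) ≥
        h2 t0 (x1 t0, x2 t0) * Real.exp (-ϱ2 * ∫ s in t0..t, Υ s) ∧
      0 < h2 t0 (x1 t0, x2 t0) * Real.exp (-ϱ2 * ∫ s in t0..t, Υ s) :=
  perturbed_double_integrator_h2_positive_general t0 θ μ1 μ2 hμ2 Υ hΥ ϱ1 ϱ2 x1 x2 u d1 d2 hx1 hx2
    hdbound h1 hh1 Λ1 hΛ1 h2 hh2 Λ2 hΛ2 hinit2 hsafe
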